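/- Let q, z, c be complex numbers with |q| < 1, |zq| < 1 and |c| ≤ 1. Then ∑_{n=1}^{∞} (q;q)_{n−1} z^n q^n / ((1 − c q^n) (zq;q)_n) = ∑_{n=1}^{∞} z q^n [∏_{k=1}^{n-1}(c − z q^k)] / ((zq;q)_n (1 − z q^n)). (For c ≠ 0 the right-hand side equals z ∑_{n=1}^{∞} (zq/c;q)_{n−1} c^{n−1} q^n / ((zq;q)_n (1 − z q^n)).) -/

import Mathlib

open Finset

/-- The finite q-Pochhammer symbol `(a;q)_n = ∏_{k=0}^{n-1} (1 - a q^k)`. -/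
noncomputable def qPoch (a q : ℂ) (n : ℕ) : ℂ := ∏ k ∈ Finset.range n, (1 - a * q ^ k)

/-!
Write `x = zq`. Both sides, as functions `F` of `x`, satisfy
`F(x) = x/(1-x)² + (c-x)/(1-x) · F(xq)`: for the right side this is the shift `n ↦ n + 1`,
for the left side it is a telescoping sum. Hence the difference `D` satisfies
`D(x) = ∏_{i<N} (c - xq^i)/(1 - xq^i) · D(xq^N)`. The products stay bounded, because
`|c| ≤ 1` and `(x;q)_N` is bounded away from `0`, while `D(y) = O(|y|)`; letting `N → ∞`
gives `D(x) = 0`.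
-/

open Filter Topology

theorem Summable.hasSum_sub_add_one {G : Type*} [AddCommGroup G] [TopologicalSpace G]
    [IsTopologicalAddGroup G] {f : ℕ → G} (hf : Summable f) :
    HasSum (fun n => f n - f (n + 1)) (f 0) := by
  have hshift : HasSum (fun n => f (n + 1)) (∑' n, f n - f 0) := by
    simpa using (hasSum_nat_add_iff' 1).2 hf.hasSum
  simpa using hf.hasSum.sub hshift

theorem eq_zero_of_eq_mul_succ_of_tendsto {R : Type*} [NormedCommRing R] {d m : ℕ → R} {B : ℝ}
    (hdm : ∀ n, d n = m n * d (n + 1)) (hm : ∀ N, ‖∏ i ∈ range N, m i‖ ≤ B)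
    (hd : Tendsto d atTop (𝓝 0)) : d 0 = 0 := by
  have hiter : ∀ N, d 0 = (∏ i ∈ range N, m i) * d N := by
    intro N
    induction N with
    | zero => simp
    | succ N ih => rw [ih, hdm N, prod_range_succ, mul_assoc]
  have hlim : Tendsto (fun N => (∏ i ∈ range N, m i) * d N) atTop (𝓝 0) :=
    isBoundedUnder_le_mul_tendsto_zero (isBoundedUnder_of ⟨B, hm⟩) hd
  simp_rw [← hiter] at hlim
  exact tendsto_const_nhds_iff.mp hlim

theorem prod_Icc_one_eq_prod_range {M : Type*} [CommMonoid M] (f : ℕ → M) (n : ℕ) :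
    ∏ k ∈ Icc 1 n, f k = ∏ k ∈ range n, f (k + 1) := by
  rw [range_eq_Ico, prod_Ico_add', zero_add, Ico_add_one_right_eq_Icc]

theorem Real.exp_neg_div_le_one_sub {u r : ℝ} (hu : 0 ≤ u) (hur : u ≤ r) (hr : r < 1) :
    exp (-(u / (1 - r))) ≤ 1 - u := by
  have hu1 : 0 < 1 - u := by linarith
  calc exp (-(u / (1 - r))) ≤ exp (-(u / (1 - u))) := by gcongr
    _ = (exp (u / (1 - u)))⁻¹ := exp_neg _
    _ ≤ (1 + u / (1 - u))⁻¹ := by gcongr; linarith [add_one_le_exp (u / (1 - u))]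
    _ = 1 - u := by field_simp; ring

theorem Real.exp_neg_sum_div_le_prod_one_sub {ι : Type*} (s : Finset ι) {u : ι → ℝ} {r : ℝ}
    (hu : ∀ i ∈ s, 0 ≤ u i ∧ u i ≤ r) (hr : r < 1) :
    exp (-((∑ i ∈ s, u i) / (1 - r))) ≤ ∏ i ∈ s, (1 - u i) := by
  rw [sum_div, ← sum_neg_distrib, exp_sum]
  exact prod_le_prod (fun i _ => (exp_pos _).le)
    fun i hi => exp_neg_div_le_one_sub (hu i hi).1 (hu i hi).2 hr

theorem sum_range_mul_pow_le {a ρ : ℝ} (ha : 0 ≤ a) (hρ0 : 0 ≤ ρ) (hρ : ρ < 1) (n : ℕ) :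
    ∑ k ∈ range n, a * ρ ^ k ≤ a / (1 - ρ) := by
  have hgeom : ∑ k ∈ range n, ρ ^ k ≤ 1 / (1 - ρ) := by
    rw [range_eq_Ico]
    simpa using geom_sum_Ico_le_of_lt_one (m := 0) (n := n) hρ0 hρ
  rw [← mul_sum, ← mul_one_div]
  exact mul_le_mul_of_nonneg_left hgeom ha

theorem one_sub_le_norm_one_sub {R : Type*} [SeminormedRing R] [NormOneClass R] {x : R} {r : ℝ} (hx : ‖x‖ ≤ r) : 1 - r ≤ ‖1 - x‖ :=
  (sub_le_sub_left hx 1).trans (by simpa using norm_sub_norm_le 1 x)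

theorem norm_mul_pow_le {R : Type*} [SeminormedRing R] [NormOneClass R] {x q : R} {r : ℝ}
    (hq : ‖q‖ ≤ 1) (hx : ‖x‖ ≤ r) (n : ℕ) : ‖x * q ^ n‖ ≤ r :=
  calc ‖x * q ^ n‖ ≤ ‖x‖ * ‖q‖ ^ n := (norm_mul_le _ _).trans (by gcongr; exact norm_pow_le q n)
    _ ≤ r := (mul_le_of_le_one_right (norm_nonneg x) (pow_le_one₀ (norm_nonneg q) hq)).trans hx

section Products

variable {q : ℂ}

theorem norm_prod_sub_mul_pow_le (hq : ‖q‖ < 1) {c : ℂ} (hc : ‖c‖ ≤ 1) (x : ℂ) (n : ℕ) :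
    ‖∏ k ∈ range n, (c - x * q ^ k)‖ ≤ Real.exp (‖x‖ / (1 - ‖q‖)) :=
  calc ‖∏ k ∈ range n, (c - x * q ^ k)‖ ≤ ∏ k ∈ range n, (1 + ‖x‖ * ‖q‖ ^ k) := by
        rw [norm_prod]
        gcongr with k
        calc ‖c - x * q ^ k‖ ≤ ‖c‖ + ‖x * q ^ k‖ := norm_sub_le _ _
          _ ≤ 1 + ‖x‖ * ‖q‖ ^ k := by rw [norm_mul, norm_pow]; gcongr
    _ ≤ Real.exp (∑ k ∈ range n, ‖x‖ * ‖q‖ ^ k) :=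
        Real.prod_one_add_le_exp_sum _ fun _ => by positivity
    _ ≤ Real.exp (‖x‖ / (1 - ‖q‖)) := by
        gcongr
        exact sum_range_mul_pow_le (norm_nonneg x) (norm_nonneg q) hq n

theorem norm_qPoch_le (hq : ‖q‖ < 1) (x : ℂ) (n : ℕ) :
    ‖qPoch x q n‖ ≤ Real.exp (‖x‖ / (1 - ‖q‖)) :=
  norm_prod_sub_mul_pow_le hq (by simp) x n

theorem exp_le_norm_qPoch (hq : ‖q‖ < 1) {r : ℝ} (hr : r < 1) {x : ℂ} (hx : ‖x‖ ≤ r) (n : ℕ) :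
    Real.exp (-(r / (1 - ‖q‖) / (1 - r))) ≤ ‖qPoch x q n‖ := by
  have hr0 : 0 ≤ r := (norm_nonneg x).trans hx
  calc Real.exp (-(r / (1 - ‖q‖) / (1 - r)))
      ≤ Real.exp (-((∑ k ∈ range n, ‖x‖ * ‖q‖ ^ k) / (1 - r))) := by
        have hsum := sum_range_mul_pow_le (norm_nonneg x) (norm_nonneg q) hq n
        have hxr : ‖x‖ / (1 - ‖q‖) ≤ r / (1 - ‖q‖) := by gcongr
        gcongr
        exact hsum.trans hxr
    _ ≤ ∏ k ∈ range n, (1 - ‖x‖ * ‖q‖ ^ k) :=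
        Real.exp_neg_sum_div_le_prod_one_sub _
          (fun k _ => ⟨by positivity, by simpa using norm_mul_pow_le hq.le hx k⟩) hr
    _ ≤ ‖qPoch x q n‖ := by
        rw [qPoch, norm_prod]
        refine prod_le_prod (fun k _ => ?_) fun k _ => ?_
        · have := norm_mul_pow_le hq.le hx k
          rw [norm_mul, norm_pow] at this
          linarith
        · simpa [norm_mul, norm_pow] using one_sub_le_norm_one_sub (le_refl ‖x * q ^ k‖)

end Products

theorem qPoch_succ (x q : ℂ) (n : ℕ) : qPoch x q (n + 1) = qPoch x q n * (1 - x * q ^ n) :=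
  prod_range_succ _ n

theorem qPoch_succ' (x q : ℂ) (n : ℕ) : qPoch x q (n + 1) = (1 - x) * qPoch (x * q) q n := by
  simp only [qPoch, prod_range_succ', pow_succ, pow_zero, mul_one, mul_assoc, mul_comm]

theorem qPoch_ne_zero {q x : ℂ} (hq : ‖q‖ < 1) (hx : ‖x‖ < 1) (n : ℕ) : qPoch x q n ≠ 0 :=
  norm_pos_iff.mp ((Real.exp_pos _).trans_le (exp_le_norm_qPoch hq hx le_rfl n))

/- The summands of the two sides of the theorem, in the variable `x = zq` and indexed from `0`. -/
noncomputable def lhsTerm (q c x : ℂ) (n : ℕ) : ℂ :=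
  qPoch q q n * x ^ (n + 1) / ((1 - c * q ^ (n + 1)) * qPoch x q (n + 1))

noncomputable def rhsTerm (q c x : ℂ) (n : ℕ) : ℂ :=
  x * q ^ n * (∏ k ∈ range n, (c - x * q ^ k)) / (qPoch x q (n + 1) * (1 - x * q ^ n))

section Algebra

variable (q c x : ℂ)

theorem rhsTerm_zero : rhsTerm q c x 0 = x / (1 - x) ^ 2 := by
  simp [rhsTerm, qPoch, sq]

theorem rhsTerm_succ (n : ℕ) :
    rhsTerm q c x (n + 1) = (c - x) / (1 - x) * rhsTerm q c (x * q) n := by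
  simp only [rhsTerm, prod_range_succ', qPoch_succ' x q (n + 1), div_eq_mul_inv, mul_inv]
  ring_nf

/- Both sides equal `(q;q)_n x^{n+1} / (x;q)_{n+2}`; note that
`lhsTerm q 0 x n = (q;q)_n x^{n+1} / (x;q)_{n+1}`. -/
theorem lhsTerm_sub_mul_lhsTerm {n : ℕ} (hc : 1 - c * q ^ (n + 1) ≠ 0)
    (hx : qPoch x q (n + 2) ≠ 0) :
    lhsTerm q c x n - (c - x) / (1 - x) * lhsTerm q c (x * q) n =
      (lhsTerm q 0 x n - lhsTerm q 0 x (n + 1)) / (1 - x) := by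
  obtain ⟨hP, hb⟩ := mul_ne_zero_iff.mp (qPoch_succ x q (n + 1) ▸ hx)
  obtain ⟨ha, hP'⟩ := mul_ne_zero_iff.mp (qPoch_succ' x q (n + 1) ▸ hx)
  rw [mul_comm x] at hb
  have hrel : (1 - x) * qPoch (x * q) q (n + 1) = qPoch x q (n + 1) * (1 - x * q ^ (n + 1)) := by
    rw [← qPoch_succ', qPoch_succ]
  simp only [lhsTerm, qPoch_succ q q n, zero_mul, sub_zero, one_mul]
  rw [qPoch_succ x q (n + 1)]
  field_simp
  linear_combination qPoch q q n * x ^ (n + 1) * (c - x) * q ^ (n + 1) * hrel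

end Algebra

section Bounds

variable {q c : ℂ}

theorem norm_mul_pow_succ_le (hq : ‖q‖ ≤ 1) (hc : ‖c‖ ≤ 1) (n : ℕ) : ‖c * q ^ (n + 1)‖ ≤ ‖q‖ := by
  rw [pow_succ', ← mul_assoc]
  exact norm_mul_pow_le hq ((norm_mul_le _ _).trans (mul_le_of_le_one_left (norm_nonneg q) hc)) n

theorem exists_norm_lhsTerm_le (hq : ‖q‖ < 1) (hc : ‖c‖ ≤ 1) {r : ℝ} (hr : r < 1) :
    ∃ K, ∀ x : ℂ, ‖x‖ ≤ r → ∀ n, ‖lhsTerm q c x n‖ ≤ K * ‖x‖ * r ^ n := by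
  set δ := Real.exp (-(r / (1 - ‖q‖) / (1 - r)))
  have hq1 : 0 < 1 - ‖q‖ := by linarith
  refine ⟨Real.exp (‖q‖ / (1 - ‖q‖)) / ((1 - ‖q‖) * δ), fun x hx n => ?_⟩
  have hr0 : 0 ≤ r := (norm_nonneg x).trans hx
  have hnum : ‖qPoch q q n * x ^ (n + 1)‖ ≤ Real.exp (‖q‖ / (1 - ‖q‖)) * (‖x‖ * r ^ n) := by
    rw [norm_mul, norm_pow, pow_succ']
    gcongr
    exact norm_qPoch_le hq q n
  have hden : (1 - ‖q‖) * δ ≤ ‖(1 - c * q ^ (n + 1)) * qPoch x q (n + 1)‖ := by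
    rw [norm_mul]
    gcongr
    · exact one_sub_le_norm_one_sub (norm_mul_pow_succ_le hq.le hc n)
    · exact exp_le_norm_qPoch hq hr hx _
  rw [lhsTerm, norm_div]
  calc _ ≤ Real.exp (‖q‖ / (1 - ‖q‖)) * (‖x‖ * r ^ n) / ((1 - ‖q‖) * δ) :=
        div_le_div₀ (by positivity) hnum (by positivity) hden
    _ = _ := by ring

theorem exists_norm_rhsTerm_le (hq : ‖q‖ < 1) (hc : ‖c‖ ≤ 1) {r : ℝ} (hr : r < 1) :
    ∃ K, ∀ x : ℂ, ‖x‖ ≤ r → ∀ n, ‖rhsTerm q c x n‖ ≤ K * ‖x‖ * ‖q‖ ^ n := by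
  set δ := Real.exp (-(r / (1 - ‖q‖) / (1 - r)))
  have hq1 : 0 < 1 - ‖q‖ := by linarith
  have hr1 : 0 < 1 - r := by linarith
  refine ⟨Real.exp (r / (1 - ‖q‖)) / (δ * (1 - r)), fun x hx n => ?_⟩
  have hnum : ‖x * q ^ n * ∏ k ∈ range n, (c - x * q ^ k)‖ ≤
      ‖x‖ * ‖q‖ ^ n * Real.exp (r / (1 - ‖q‖)) := by
    rw [norm_mul, norm_mul, norm_pow]
    gcongr
    exact (norm_prod_sub_mul_pow_le hq hc x n).trans (by gcongr)
  have hden : δ * (1 - r) ≤ ‖qPoch x q (n + 1) * (1 - x * q ^ n)‖ := by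
    rw [norm_mul]
    gcongr
    · exact exp_le_norm_qPoch hq hr hx _
    · exact one_sub_le_norm_one_sub (norm_mul_pow_le hq.le hx n)
  rw [rhsTerm, norm_div]
  calc _ ≤ ‖x‖ * ‖q‖ ^ n * Real.exp (r / (1 - ‖q‖)) / (δ * (1 - r)) :=
        div_le_div₀ (by positivity) hnum (by positivity) hden
    _ = _ := by ring

theorem summable_lhsTerm (hq : ‖q‖ < 1) (hc : ‖c‖ ≤ 1) {x : ℂ} (hx : ‖x‖ < 1) :
    Summable (lhsTerm q c x) := by
  obtain ⟨K, hK⟩ := exists_norm_lhsTerm_le hq hc hx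
  exact .of_norm_bounded ((summable_geometric_of_lt_one (norm_nonneg x) hx).mul_left (K * ‖x‖))
    (hK x le_rfl)

theorem summable_rhsTerm (hq : ‖q‖ < 1) (hc : ‖c‖ ≤ 1) {x : ℂ} (hx : ‖x‖ < 1) :
    Summable (rhsTerm q c x) := by
  obtain ⟨K, hK⟩ := exists_norm_rhsTerm_le hq hc hx
  exact .of_norm_bounded ((summable_geometric_of_lt_one (norm_nonneg q) hq).mul_left (K * ‖x‖))
    (hK x le_rfl)

theorem exists_norm_tsum_lhsTerm_le (hq : ‖q‖ < 1) (hc : ‖c‖ ≤ 1) {r : ℝ} (hr : r < 1) :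
    ∃ K, ∀ x : ℂ, ‖x‖ ≤ r → ‖∑' n, lhsTerm q c x n‖ ≤ K * ‖x‖ := by
  obtain ⟨K, hK⟩ := exists_norm_lhsTerm_le hq hc hr
  refine ⟨K * (1 - r)⁻¹, fun x hx => ?_⟩
  have hgeom := (hasSum_geometric_of_lt_one ((norm_nonneg x).trans hx) hr).mul_left (K * ‖x‖)
  exact (tsum_of_norm_bounded hgeom (hK x hx)).trans_eq (by ring)

theorem exists_norm_tsum_rhsTerm_le (hq : ‖q‖ < 1) (hc : ‖c‖ ≤ 1) {r : ℝ} (hr : r < 1) :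
    ∃ K, ∀ x : ℂ, ‖x‖ ≤ r → ‖∑' n, rhsTerm q c x n‖ ≤ K * ‖x‖ := by
  obtain ⟨K, hK⟩ := exists_norm_rhsTerm_le hq hc hr
  refine ⟨K * (1 - ‖q‖)⁻¹, fun x hx => ?_⟩
  have hgeom := (hasSum_geometric_of_lt_one (norm_nonneg q) hq).mul_left (K * ‖x‖)
  exact (tsum_of_norm_bounded hgeom (hK x hx)).trans_eq (by ring)

end Bounds

section FunctionalEquation

variable {q c x : ℂ}

theorem tsum_rhsTerm_eq (hs : Summable (rhsTerm q c x)) :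
    ∑' n, rhsTerm q c x n =
      x / (1 - x) ^ 2 + (c - x) / (1 - x) * ∑' n, rhsTerm q c (x * q) n := by
  rw [hs.tsum_eq_zero_add, rhsTerm_zero]
  simp_rw [rhsTerm_succ, tsum_mul_left]

theorem tsum_lhsTerm_eq (hq : ‖q‖ < 1) (hc : ‖c‖ ≤ 1) (hx : ‖x‖ < 1) :
    ∑' n, lhsTerm q c x n =
      x / (1 - x) ^ 2 + (c - x) / (1 - x) * ∑' n, lhsTerm q c (x * q) n := by
  have hxq : ‖x * q‖ < 1 := by simpa using (norm_mul_pow_le hq.le le_rfl 1).trans_lt hx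
  have htel : HasSum (fun n => (lhsTerm q 0 x n - lhsTerm q 0 x (n + 1)) / (1 - x))
      (x / (1 - x) ^ 2) := by
    have h0 : lhsTerm q 0 x 0 / (1 - x) = x / (1 - x) ^ 2 := by simp [lhsTerm, qPoch, sq, div_div]
    simpa only [h0] using
      (summable_lhsTerm (c := 0) hq (by simp) hx).hasSum_sub_add_one.div_const (1 - x)
  have hterm : ∀ n, (lhsTerm q 0 x n - lhsTerm q 0 x (n + 1)) / (1 - x) +
      (c - x) / (1 - x) * lhsTerm q c (x * q) n = lhsTerm q c x n := fun n => by
    have hcq : 1 - c * q ^ (n + 1) ≠ 0 := sub_ne_zero.2 fun h => by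
      simpa [← h] using (norm_mul_pow_succ_le hq.le hc n).trans_lt hq
    rw [← lhsTerm_sub_mul_lhsTerm q c x hcq (qPoch_ne_zero hq hx _)]
    ring
  have hsum := htel.add ((summable_lhsTerm hq hc hxq).hasSum.mul_left ((c - x) / (1 - x)))
  simp_rw [hterm] at hsum
  exact hsum.tsum_eq

end FunctionalEquation

theorem tsum_lhsTerm_eq_tsum_rhsTerm {q c x : ℂ} (hq : ‖q‖ < 1) (hc : ‖c‖ ≤ 1) (hx : ‖x‖ < 1) :
    ∑' n, lhsTerm q c x n = ∑' n, rhsTerm q c x n := by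
  set D : ℂ → ℂ := fun y => ∑' n, lhsTerm q c y n - ∑' n, rhsTerm q c y n with hD
  have horbit : ∀ N, ‖x * q ^ N‖ ≤ ‖x‖ := norm_mul_pow_le hq.le le_rfl
  have hfe : ∀ N, D (x * q ^ N) = (c - x * q ^ N) / (1 - x * q ^ N) * D (x * q ^ (N + 1)) := by
    intro N
    have hy := (horbit N).trans_lt hx
    simp only [hD, tsum_lhsTerm_eq hq hc hy, tsum_rhsTerm_eq (summable_rhsTerm hq hc hy),
      pow_succ, mul_assoc]
    ring
  have hprod : ∀ N, ‖∏ i ∈ range N, (c - x * q ^ i) / (1 - x * q ^ i)‖ ≤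
      Real.exp (‖x‖ / (1 - ‖q‖)) / Real.exp (-(‖x‖ / (1 - ‖q‖) / (1 - ‖x‖))) := fun N => by
    rw [prod_div_distrib, norm_div]
    exact div_le_div₀ (by positivity) (norm_prod_sub_mul_pow_le hq hc x N) (Real.exp_pos _)
      (exp_le_norm_qPoch hq hx le_rfl N)
  have hlim : Tendsto (fun N => D (x * q ^ N)) atTop (𝓝 0) := by
    obtain ⟨Ka, hKa⟩ := exists_norm_tsum_lhsTerm_le hq hc hx
    obtain ⟨Kb, hKb⟩ := exists_norm_tsum_rhsTerm_le hq hc hx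
    refine squeeze_zero_norm (fun N => ?_) (by
      simpa using (tendsto_pow_atTop_nhds_zero_of_lt_one (norm_nonneg q) hq).const_mul
        ((Ka + Kb) * ‖x‖))
    calc ‖D (x * q ^ N)‖ ≤ Ka * ‖x * q ^ N‖ + Kb * ‖x * q ^ N‖ :=
          (norm_sub_le _ _).trans (add_le_add (hKa _ (horbit N)) (hKb _ (horbit N)))
      _ = (Ka + Kb) * ‖x‖ * ‖q‖ ^ N := by rw [norm_mul, norm_pow]; ring
  simpa [hD, sub_eq_zero] using eq_zero_of_eq_mul_succ_of_tendsto hfe hprod hlim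

/-- Theorem 2.13: for |q| < 1, |zq| < 1, |c| ≤ 1,
∑_{n≥1} (q;q)_{n−1} z^n q^n/((1 − c q^n)(zq;q)_n)
  = ∑_{n≥1} z q^n ∏_{k=1}^{n-1}(c − z q^k)/((zq;q)_n (1 − z q^n)). -/
theorem stmt15 (q z c : ℂ) (hq : ‖q‖ < 1) (hzq : ‖z * q‖ < 1)
    (hc : ‖c‖ ≤ 1) :
    ∑' n : ℕ, qPoch q q n * z ^ (n + 1) * q ^ (n + 1) /
        ((1 - c * q ^ (n + 1)) * qPoch (z * q) q (n + 1)) =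
      ∑' n : ℕ, z * q ^ (n + 1) * (∏ k ∈ Finset.Icc 1 n, (c - z * q ^ k)) /
        (qPoch (z * q) q (n + 1) * (1 - z * q ^ (n + 1))) := by
  have hlhs : ∀ n, qPoch q q n * z ^ (n + 1) * q ^ (n + 1) /
      ((1 - c * q ^ (n + 1)) * qPoch (z * q) q (n + 1)) = lhsTerm q c (z * q) n := fun n => by
    rw [lhsTerm, mul_pow, mul_assoc]
  have hrhs : ∀ n, z * q ^ (n + 1) * (∏ k ∈ Icc 1 n, (c - z * q ^ k)) /
      (qPoch (z * q) q (n + 1) * (1 - z * q ^ (n + 1))) = rhsTerm q c (z * q) n := fun n => by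
    simp only [rhsTerm, prod_Icc_one_eq_prod_range, pow_succ', mul_assoc]
  simp_rw [hlhs, hrhs]
  exact tsum_lhsTerm_eq_tsum_rhsTerm hq hc hzq
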